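/- Let (d_k) be summable nonnegative reals, λ > 0, N ∈ ℕ, and ϑ the positive solution of ϑ = λ + (ϑ/N)∑_k d_k/(d_k + ϑ). Then ∂_λϑ − 1 = (∂_λϑ/N)·∑_k d_k²/(ϑ + d_k)². -/

import Mathlib

/-!
Near `λ` the fixed-point equation says `ϑ l = l + F (ϑ l) / N` with
`F y = ∑ₖ y dₖ / (dₖ + y)`. Each term has derivative `dₖ² / (y + dₖ)²`, which is bounded by
`dₖ / c` uniformly for `y > c > 0`, so `F` may be differentiated termwise. The chain rule and
uniqueness of derivatives then give `∂ϑ = 1 + (∂ϑ / N) · F'(ϑ)`.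
-/

open Filter Topology Set

lemma hasDerivAt_mul_div_add {a y : ℝ} (h : a + y ≠ 0) :
    HasDerivAt (fun z => z * a / (a + z)) (a ^ 2 / (y + a) ^ 2) y := by
  refine (((hasDerivAt_id y).mul_const a).div ((hasDerivAt_id y).const_add a) h).congr_deriv ?_
  simp only [id, add_comm y a]
  field_simp
  ring

lemma sq_div_add_sq_le {a c y : ℝ} (ha : 0 ≤ a) (hc : 0 < c) (hcy : c ≤ y) :
    a ^ 2 / (y + a) ^ 2 ≤ a / c := by
  have hya : 0 < y + a := by linarith
  rw [div_le_div_iff₀ (by positivity) hc]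
  nlinarith [mul_le_mul_of_nonneg_left hcy (mul_nonneg ha ha), mul_nonneg ha (sq_nonneg y),
    pow_nonneg ha 3]

lemma summable_mul_div_add {d : ℕ → ℝ} (hd : ∀ k, 0 ≤ d k) (hsum : Summable d) {y : ℝ}
    (hy : 0 < y) : Summable fun k => y * d k / (d k + y) := by
  refine hsum.of_nonneg_of_le (fun k => by have := hd k; positivity) fun k => ?_
  rw [div_le_iff₀ (by linarith [hd k])]
  nlinarith [hd k]

lemma hasDerivAt_tsum_mul_div_add {d : ℕ → ℝ} (hd : ∀ k, 0 ≤ d k) (hsum : Summable d)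
    {y : ℝ} (hy : 0 < y) :
    HasDerivAt (fun z => ∑' k, z * d k / (d k + z)) (∑' k, d k ^ 2 / (y + d k) ^ 2) y := by
  have hy₂ : 0 < y / 2 := half_pos hy
  have hmem : y ∈ Ioi (y / 2) := half_lt_self hy
  refine hasDerivAt_tsum_of_isPreconnected (hsum.div_const (y / 2)) isOpen_Ioi
    isPreconnected_Ioi (fun k z hz => hasDerivAt_mul_div_add ?_) (fun k z hz => ?_) hmem
    (summable_mul_div_add hd hsum hy) hmem
  · have : y / 2 < z := hz
    linarith [hd k]
  · rw [Real.norm_of_nonneg (by positivity)]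
    exact sq_div_add_sq_le (hd k) hy₂ (le_of_lt hz)

theorem sct_deriv_identity_general (d : ℕ → ℝ) (hd : ∀ k, 0 ≤ d k) (hsum : Summable d)
    (N : ℕ) (lam : ℝ) (hlam : 0 < lam) (θ : ℝ → ℝ)
    (hθ : ∀ l, 0 < l → 0 < θ l ∧ θ l = l + (θ l / N) * ∑' k, d k / (d k + θ l))
    (D : ℝ) (hD : HasDerivAt θ D lam) :
    D - 1 = (D / N) * ∑' k, (d k) ^ 2 / (θ lam + d k) ^ 2 := by
  set F : ℝ → ℝ := fun y => ∑' k, y * d k / (d k + y)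
  have hfix : θ =ᶠ[𝓝 lam] fun l => l + (N : ℝ)⁻¹ * F (θ l) := by
    filter_upwards [Ioi_mem_nhds hlam] with l hl
    have hF : F (θ l) = θ l * ∑' k, d k / (d k + θ l) := by
      simp only [F, mul_div_assoc, tsum_mul_left]
    rw [hF]
    nth_rewrite 1 [(hθ l hl).2]
    ring
  have hF := hasDerivAt_tsum_mul_div_add hd hsum (hθ lam hlam).1
  have hDeq := hD.unique
    (((hasDerivAt_id lam).add ((hF.comp lam hD).const_mul _)).congr_of_eventuallyEq hfix)
  linear_combination hDeq

/-- differentiating the fixed-point equation yields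
`∂_λϑ − 1 = (∂_λϑ/N)·∑_k d_k²/(ϑ + d_k)²`. -/
theorem sct_deriv_identity (d : ℕ → ℝ) (hd : ∀ k, 0 ≤ d k) (hsum : Summable d)
    (N : ℕ) (hN : 0 < N) (lam : ℝ) (hlam : 0 < lam) (θ : ℝ → ℝ)
    (hθ : ∀ l, 0 < l → 0 < θ l ∧ θ l = l + (θ l / N) * ∑' k, d k / (d k + θ l))
    (D : ℝ) (hD : HasDerivAt θ D lam) :
    D - 1 = (D / N) * ∑' k, (d k) ^ 2 / (θ lam + d k) ^ 2 :=
  sct_deriv_identity_general d hd hsum N lam hlam θ hθ D hD
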